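/- Let m ≥ 1 and let λ_1,...,λ_m be positive reals, not necessarily distinct, with λ_1 ≤ ... ≤ λ_m. Then the (m+1)×(m+1) determinant D = 1 + ∑_{k=1}^m (λ_{m-k+1}⋯λ_m) E_k satisfies D ≥ ∑_{k=0}^m E_k^{(2)} = ∏_{i=1}^m (1+λ_i²), and in particular D ≥ 1. -/

import Mathlib

open Finset

/-- The `k`-th elementary symmetric function of `l 0, ..., l (m-1)`. -/
def esymmVal (m : ℕ) (l : Fin m → ℝ) (k : ℕ) : ℝ :=
  ∑ s ∈ Finset.powersetCard k (Finset.univ : Finset (Fin m)), ∏ i ∈ s, l i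

/-- The product of the top `k` values `l (m-k) ⋯ l (m-1)`. -/
def topProd (m : ℕ) (l : Fin m → ℝ) (k : ℕ) : ℝ :=
  ∏ i ∈ Finset.univ.filter (fun i : Fin m => m - k ≤ (i : ℕ)), l i

/-! For monotone nonnegative `λ`, the set `T` of the last `k` indices maximises `∏_{i ∈ s} λ_i`
over `k`-subsets `s`: both products share the factor over `s ∩ T`, and each of the
`#(s \ T) = #(T \ s)` values on `s \ T` is at most every value on `T \ s`. Hence each term
`∏_{i ∈ s} λ_i²` of `E_k^{(2)}` is at most `(λ_{m-k+1} ⋯ λ_m) ∏_{i ∈ s} λ_i`; summing over `s`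
and `k` gives the inequality, and the identity is the expansion of `∏ (1 + λ_i²)`. -/

theorem Finset.prod_le_prod_of_card_eq_of_forall_le {ι R : Type*} [CommSemiring R] [LinearOrder R]
    [IsOrderedRing R] {A B : Finset ι} {f : ι → R}
    (hcard : #A = #B) (hf : ∀ a ∈ A, 0 ≤ f a) (hAB : ∀ a ∈ A, ∀ b ∈ B, f a ≤ f b) :
    ∏ a ∈ A, f a ≤ ∏ b ∈ B, f b := by
  rcases B.eq_empty_or_nonempty with rfl | hB
  · rw [card_eq_zero.mp hcard]
  set c := B.inf' hB f
  calc ∏ a ∈ A, f a ≤ ∏ _a ∈ A, c :=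
        prod_le_prod hf fun a ha => le_inf' hB _ fun b hb => hAB a ha b hb
    _ = ∏ _b ∈ B, c := by rw [prod_const, prod_const, hcard]
    _ ≤ ∏ b ∈ B, f b := by
        obtain ⟨a, ha⟩ : A.Nonempty := card_pos.mp (hcard ▸ card_pos.mpr hB)
        have hc : 0 ≤ c := (hf a ha).trans (le_inf' hB _ fun b hb => hAB a ha b hb)
        exact prod_le_prod (fun _ _ => hc) fun b hb => inf'_le f hb

lemma card_filter_sub_le_val {m k : ℕ} (hk : k ≤ m) :
    #(univ.filter fun i : Fin m => m - k ≤ (i : ℕ)) = k := by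
  have := card_filter_add_card_filter_not (s := (univ : Finset (Fin m))) (fun i => (i : ℕ) < m - k)
  simp only [not_lt, Fin.card_filter_val_lt, card_univ, Fintype.card_fin] at this
  omega

lemma prod_le_topProd {m k : ℕ} {l : Fin m → ℝ} (hl : ∀ i, 0 ≤ l i) (hmono : Monotone l)
    {s : Finset (Fin m)} (hs : #s = k) :
    ∏ i ∈ s, l i ≤ topProd m l k := by
  set T := univ.filter fun i : Fin m => m - k ≤ (i : ℕ)
  have hT : #T = k := card_filter_sub_le_val (hs ▸ (card_le_univ s).trans_eq (Fintype.card_fin m))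
  have hswap : ∏ i ∈ s \ T, l i ≤ ∏ i ∈ T \ s, l i := by
    refine prod_le_prod_of_card_eq_of_forall_le (card_sdiff_comm (hs.trans hT.symm))
      (fun i _ => hl i) fun i hi j hj => hmono ?_
    simp only [T, mem_sdiff, mem_filter, mem_univ, true_and, not_le] at hi hj
    exact Fin.le_def.mpr (hi.2.le.trans hj.1)
  rw [topProd, ← prod_inter_mul_prod_sdiff s T, ← prod_inter_mul_prod_sdiff T s, inter_comm]
  exact mul_le_mul_of_nonneg_left hswap (prod_nonneg fun i _ => hl i)

lemma esymmVal_sq_le_topProd_mul_esymmVal {m : ℕ} {l : Fin m → ℝ} (hl : ∀ i, 0 ≤ l i)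
    (hmono : Monotone l) (k : ℕ) :
    esymmVal m (fun i => l i ^ 2) k ≤ topProd m l k * esymmVal m l k := by
  rw [esymmVal, esymmVal, mul_sum]
  refine sum_le_sum fun s hs => ?_
  calc ∏ i ∈ s, l i ^ 2 = (∏ i ∈ s, l i) * ∏ i ∈ s, l i := by
        rw [← prod_mul_distrib]; simp only [sq]
    _ ≤ topProd m l k * ∏ i ∈ s, l i :=
        mul_le_mul_of_nonneg_right (prod_le_topProd hl hmono (mem_powersetCard_univ.mp hs))
          (prod_nonneg fun i _ => hl i)

lemma prod_one_add_eq_sum_esymmVal (m : ℕ) (f : Fin m → ℝ) :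
    ∏ i, (1 + f i) = ∑ k ∈ range (m + 1), esymmVal m f k := by
  rw [prod_one_add, sum_powerset, card_univ, Fintype.card_fin]
  rfl

lemma topProd_zero (m : ℕ) (l : Fin m → ℝ) : topProd m l 0 = 1 := by
  rw [topProd, Nat.sub_zero, filter_false_of_mem fun i _ => not_le.mpr i.is_lt, prod_empty]

lemma esymmVal_zero (m : ℕ) (l : Fin m → ℝ) : esymmVal m l 0 = 1 := by
  simp [esymmVal]

lemma sum_range_succ_eq_add_sum_Icc (m : ℕ) (f : ℕ → ℝ) :
    ∑ k ∈ range (m + 1), f k = f 0 + ∑ k ∈ Icc 1 m, f k := by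
  rw [range_eq_Ico, sum_eq_sum_Ico_succ_bot (Nat.succ_pos m)]
  rfl

theorem stmt16_general (m : ℕ) (l : Fin m → ℝ) (hl : ∀ i, 0 < l i)
    (hmono : Monotone l) :
    (∑ k ∈ Finset.range (m + 1), esymmVal m (fun i => (l i) ^ 2) k
        ≤ 1 + ∑ k ∈ Finset.Icc 1 m, topProd m l k * esymmVal m l k) ∧
    (∑ k ∈ Finset.range (m + 1), esymmVal m (fun i => (l i) ^ 2) k
        = ∏ i : Fin m, (1 + (l i) ^ 2)) ∧
    (1 ≤ 1 + ∑ k ∈ Finset.Icc 1 m, topProd m l k * esymmVal m l k) := by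
  have hl' : ∀ i, 0 ≤ l i := fun i => (hl i).le
  have hbound : ∑ k ∈ range (m + 1), esymmVal m (fun i => l i ^ 2) k
      ≤ 1 + ∑ k ∈ Icc 1 m, topProd m l k * esymmVal m l k := by
    calc _ ≤ ∑ k ∈ range (m + 1), topProd m l k * esymmVal m l k :=
          sum_le_sum fun k _ => esymmVal_sq_le_topProd_mul_esymmVal hl' hmono k
      _ = _ := by rw [sum_range_succ_eq_add_sum_Icc, topProd_zero, esymmVal_zero, one_mul]
  have hexpand := (prod_one_add_eq_sum_esymmVal m fun i => l i ^ 2).symm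
  refine ⟨hbound, hexpand, le_trans ?_ (hexpand ▸ hbound)⟩
  exact one_le_prod fun i _ => le_add_of_nonneg_right (sq_nonneg (l i))

theorem stmt16 (m : ℕ) (hm : 1 ≤ m) (l : Fin m → ℝ) (hl : ∀ i, 0 < l i)
    (hmono : Monotone l) :
    (∑ k ∈ Finset.range (m + 1), esymmVal m (fun i => (l i) ^ 2) k
        ≤ 1 + ∑ k ∈ Finset.Icc 1 m, topProd m l k * esymmVal m l k) ∧
    (∑ k ∈ Finset.range (m + 1), esymmVal m (fun i => (l i) ^ 2) k
        = ∏ i : Fin m, (1 + (l i) ^ 2)) ∧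
    (1 ≤ 1 + ∑ k ∈ Finset.Icc 1 m, topProd m l k * esymmVal m l k) :=
  stmt16_general m l hl hmono
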